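/- Suppose w₀ = 0, α_{n+1} ≤ ρ αₙ / 2 for every n, x ∈ D₁, and the subdifferential ∂T_w(x) is nonempty. Then liminfₙ ∑_{k=1}^n w_k ≥ 0. -/

import Mathlib

open Filter Topology

/-- The (viscosity/Fréchet) subdifferential of `f : ℝ → ℝ`, relative to the domain `s`,
at the point `x`: the set of `c` with
`liminf_{h → 0, x + h ∈ s} (f (x + h) - f x - c * h) / |h| ≥ 0`. -/
def subdifferentialWithin (f : ℝ → ℝ) (s : Set ℝ) (x : ℝ) : Set ℝ :=
  {c | ∀ ε > (0 : ℝ), ∀ᶠ h in 𝓝[≠] (0 : ℝ), x + h ∈ s → -ε ≤ (f (x + h) - f x - c * h) / |h|}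

/-- The superdifferential `∂⁺f(x) = -∂(-f)(x)`. -/
def superdifferentialWithin (f : ℝ → ℝ) (s : Set ℝ) (x : ℝ) : Set ℝ :=
  {c | -c ∈ subdifferentialWithin (fun y => -f y) s x}

/-- The set of midpoints of the connected components of the complement of `s` (the
bounded components being the open intervals between consecutive points of `s`). -/
def midpoints (s : Set ℝ) : Set ℝ :=
  {m | ∃ a ∈ s, ∃ b ∈ s, a < b ∧ Set.Ioo a b ∩ s = ∅ ∧ m = (a + b) / 2}

theorem stmt9
(D : ℕ → Set ℝ) (α : ℕ → ℝ) (ρ : ℝ) (w : ℕ → ℝ)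
    (hD0 : (0 : ℝ) ∈ D 0) (hD1 : (1 : ℝ) ∈ D 0)
    (hDsub : ∀ n, D n ⊆ Set.Icc 0 1)
    (hDfin : ∀ n, (D n).Finite)
    (hDmono : ∀ n, D n ⊆ D (n + 1))
    (hρ : ρ ∈ Set.Ioc (0 : ℝ) 1)
    (hα : Summable α)
    (hgapU : ∀ n, ∀ a ∈ D n, ∀ b ∈ D n, a < b → Set.Ioo a b ∩ D n = ∅ → b - a ≤ α n)
    (hgapL : ∀ n, ∀ a ∈ D n, ∀ b ∈ D n, a < b → ρ * α n ≤ b - a)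
    (hwα : Summable (fun n => |w n * α n|))
    (hw0 : w 0 = 0) (hα2 : ∀ n, α (n + 1) ≤ ρ * α n / 2)
    (x : ℝ) (hx : x ∈ D 1) (hx01 : x ∈ Set.Ioo (0 : ℝ) 1)
    (hsub : (subdifferentialWithin (fun z => ∑' n : ℕ, w n * Metric.infDist z (D n))
        (Set.Icc 0 1) x).Nonempty) :
    ∀ ε > (0 : ℝ), ∀ᶠ n in atTop, -ε ≤ ∑ k ∈ Finset.Icc 1 n, w k := by
  intro ε hε
  obtain ⟨c, hc⟩ := hsub
  simp only [subdifferentialWithin, Set.mem_setOf_eq] at hc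
  set S : ℕ → ℝ := fun n => ∑ k ∈ Finset.Icc 1 n, w k with hSdef
  have hρ0 : 0 < ρ := hρ.1
  have hρ1 : ρ ≤ 1 := hρ.2
  have hx0 : 0 < x := hx01.1
  have hx1 : x < 1 := hx01.2
  -- monotonicity of D
  have hDle : ∀ m k : ℕ, m ≤ k → D m ⊆ D k := by
    intro m k h
    induction h with
    | refl => exact Set.Subset.refl _
    | step _ ih => exact fun y hy => hDmono _ (ih hy)
  have hxk : ∀ k, 1 ≤ k → x ∈ D k := fun k hk => hDle 1 k hk hx
  -- gap points to the right and left of x in D (m+1)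
  have hgapx : ∀ m : ℕ, ∃ t : ℝ, 0 < t ∧ ρ * α (m+1) ≤ t ∧ t ≤ α (m+1) ∧ x + t ∈ D (m+1) := by
    intro m
    set E := D (m+1) ∩ Set.Ioi x with hE
    have hEfin : E.Finite := (hDfin (m+1)).subset Set.inter_subset_left
    have hEne : E.Nonempty := ⟨1, hDle 0 (m+1) (Nat.zero_le _) hD1, hx1⟩
    set b := sInf E with hb
    have hbE : b ∈ E := hEne.csInf_mem hEfin
    have hbD : b ∈ D (m+1) := hbE.1
    have hxb : x < b := hbE.2
    have hIoo : Set.Ioo x b ∩ D (m+1) = ∅ := by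
      ext y
      simp only [Set.mem_inter_iff, Set.mem_Ioo, Set.mem_empty_iff_false, iff_false]
      rintro ⟨⟨hy1, hy2⟩, hyD⟩
      have : b ≤ y := csInf_le hEfin.bddBelow ⟨hyD, hy1⟩
      linarith
    have hxm : x ∈ D (m+1) := hxk (m+1) (Nat.le_add_left 1 m)
    refine ⟨b - x, by linarith, hgapL (m+1) x hxm b hbD hxb, hgapU (m+1) x hxm b hbD hxb hIoo, ?_⟩
    simpa using hbD
  have hgapx' : ∀ m : ℕ, ∃ t : ℝ, 0 < t ∧ ρ * α (m+1) ≤ t ∧ t ≤ α (m+1) ∧ x - t ∈ D (m+1) := by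
    intro m
    set E := D (m+1) ∩ Set.Iio x with hE
    have hEfin : E.Finite := (hDfin (m+1)).subset Set.inter_subset_left
    have hEne : E.Nonempty := ⟨0, hDle 0 (m+1) (Nat.zero_le _) hD0, hx0⟩
    set a := sSup E with ha
    have haE : a ∈ E := hEne.csSup_mem hEfin
    have haD : a ∈ D (m+1) := haE.1
    have hax : a < x := haE.2
    have hIoo : Set.Ioo a x ∩ D (m+1) = ∅ := by
      ext y
      simp only [Set.mem_inter_iff, Set.mem_Ioo, Set.mem_empty_iff_false, iff_false]
      rintro ⟨⟨hy1, hy2⟩, hyD⟩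
      have : y ≤ a := le_csSup hEfin.bddAbove ⟨hyD, hy2⟩
      linarith
    have hxm : x ∈ D (m+1) := hxk (m+1) (Nat.le_add_left 1 m)
    refine ⟨x - a, by linarith, ?_, ?_, ?_⟩
    · have := hgapL (m+1) a haD x hxm hax; linarith
    · have := hgapU (m+1) a haD x hxm hax hIoo; linarith
    · simpa using haD
  -- positivity and antitonicity of α
  have hαpos : ∀ n, 0 < α n := by
    have h1 : ∀ n, 0 < α (n+1) := by
      intro n
      obtain ⟨t, ht0, _, htle, _⟩ := hgapx n
      linarith
    intro n
    cases n with
    | zero => nlinarith [h1 0, hα2 0]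
    | succ n => exact h1 n
  have hαanti : Antitone α := by
    refine antitone_nat_of_succ_le (fun n => ?_)
    nlinarith [hα2 n, hαpos n]
  -- exact value of infDist on D k for small displacements
  have hdistR : ∀ k, 1 ≤ k → ∀ t : ℝ, 0 < t → 2 * t ≤ ρ * α k →
      Metric.infDist (x + t) (D k) = t := by
    intro k hk t ht0 ht2
    have hxDk : x ∈ D k := hxk k hk
    refine le_antisymm ?_ ?_
    · have := Metric.infDist_le_dist_of_mem (x := x + t) hxDk
      rwa [Real.dist_eq, show x + t - x = t by ring, abs_of_pos ht0] at this
    · by_contra hlt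
      push_neg at hlt
      obtain ⟨y, hyD, hyd⟩ := (Metric.infDist_lt_iff ⟨x, hxDk⟩).1 hlt
      rw [Real.dist_eq] at hyd
      have habs := abs_lt.1 hyd
      rcases lt_trichotomy y x with h | h | h
      · have := hgapL k y hyD x hxDk h
        linarith [habs.1]
      · subst h; simp at hyd; linarith [abs_of_pos ht0 ▸ hyd]
      · have := hgapL k x hxDk y hyD h
        linarith [habs.1, habs.2]
  have hdistL : ∀ k, 1 ≤ k → ∀ t : ℝ, 0 < t → 2 * t ≤ ρ * α k →
      Metric.infDist (x - t) (D k) = t := by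
    intro k hk t ht0 ht2
    have hxDk : x ∈ D k := hxk k hk
    refine le_antisymm ?_ ?_
    · have := Metric.infDist_le_dist_of_mem (x := x - t) hxDk
      rwa [Real.dist_eq, show x - t - x = -t by ring, abs_neg, abs_of_pos ht0] at this
    · by_contra hlt
      push_neg at hlt
      obtain ⟨y, hyD, hyd⟩ := (Metric.infDist_lt_iff ⟨x, hxDk⟩).1 hlt
      rw [Real.dist_eq] at hyd
      have habs := abs_lt.1 hyd
      rcases lt_trichotomy y x with h | h | h
      · have := hgapL k y hyD x hxDk h
        linarith [habs.1, habs.2]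
      · subst h; simp at hyd; linarith
      · have := hgapL k x hxDk y hyD h
        linarith [habs.2]
  -- T x = 0
  have hTx : (∑' k : ℕ, w k * Metric.infDist x (D k)) = 0 := by
    have h0 : ∀ k : ℕ, w k * Metric.infDist x (D k) = 0 := by
      intro k
      match k with
      | 0 => rw [hw0, zero_mul]
      | (j+1) => rw [Metric.infDist_zero_of_mem (hxk (j+1) (Nat.le_add_left 1 j)), mul_zero]
    exact (tsum_congr h0).trans tsum_zero
  -- smallness of admissible t relative to the gaps of D k, k ≤ n
  have hsmall : ∀ n : ℕ, ∀ t : ℝ, t ≤ α (n+1) → ∀ k, 1 ≤ k → k ≤ n → 2 * t ≤ ρ * α k := by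
    intro n t htle k hk1 hkn
    have h1 : α (n+1) ≤ ρ * α n / 2 := hα2 n
    have h2 : α n ≤ α k := hαanti hkn
    nlinarith [hρ0]
  -- key evaluation of T at the gap points
  have hTkeyR : ∀ n : ℕ, ∀ t : ℝ, 0 < t → t ≤ α (n+1) → x + t ∈ D (n+1) →
      (∑' k : ℕ, w k * Metric.infDist (x + t) (D k)) = S n * t := by
    intro n t ht0 htle hmem
    have hvan : ∀ k ∉ Finset.Icc 1 n, w k * Metric.infDist (x + t) (D k) = 0 := by
      intro k hk
      simp only [Finset.mem_Icc, not_and_or, not_le] at hk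
      rcases hk with hk | hk
      · have hk0 : k = 0 := by omega
        subst hk0; rw [hw0, zero_mul]
      · have : x + t ∈ D k := hDle (n+1) k hk hmem
        rw [Metric.infDist_zero_of_mem this, mul_zero]
    calc (∑' k : ℕ, w k * Metric.infDist (x + t) (D k))
        = ∑ k ∈ Finset.Icc 1 n, w k * Metric.infDist (x + t) (D k) := tsum_eq_sum hvan
      _ = ∑ k ∈ Finset.Icc 1 n, w k * t := Finset.sum_congr rfl (fun k hk => by
          rw [Finset.mem_Icc] at hk
          rw [hdistR k hk.1 t ht0 (hsmall n t htle k hk.1 hk.2)])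
      _ = S n * t := by rw [← Finset.sum_mul]
  have hTkeyL : ∀ n : ℕ, ∀ t : ℝ, 0 < t → t ≤ α (n+1) → x - t ∈ D (n+1) →
      (∑' k : ℕ, w k * Metric.infDist (x - t) (D k)) = S n * t := by
    intro n t ht0 htle hmem
    have hvan : ∀ k ∉ Finset.Icc 1 n, w k * Metric.infDist (x - t) (D k) = 0 := by
      intro k hk
      simp only [Finset.mem_Icc, not_and_or, not_le] at hk
      rcases hk with hk | hk
      · have hk0 : k = 0 := by omega
        subst hk0; rw [hw0, zero_mul]
      · have : x - t ∈ D k := hDle (n+1) k hk hmem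
        rw [Metric.infDist_zero_of_mem this, mul_zero]
    calc (∑' k : ℕ, w k * Metric.infDist (x - t) (D k))
        = ∑ k ∈ Finset.Icc 1 n, w k * Metric.infDist (x - t) (D k) := tsum_eq_sum hvan
      _ = ∑ k ∈ Finset.Icc 1 n, w k * t := Finset.sum_congr rfl (fun k hk => by
          rw [Finset.mem_Icc] at hk
          rw [hdistL k hk.1 t ht0 (hsmall n t htle k hk.1 hk.2)])
      _ = S n * t := by rw [← Finset.sum_mul]
  -- choose the gap sequences
  choose t ht0 htρ htle htD using hgapx
  choose t' ht0' htρ' htle' htD' using hgapx'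
  -- tendsto facts
  have hα0 : Tendsto (fun n : ℕ => α (n+1)) atTop (𝓝 0) :=
    hα.tendsto_atTop_zero.comp (tendsto_add_atTop_nat 1)
  have htt : Tendsto t atTop (𝓝 0) :=
    squeeze_zero (fun n => (ht0 n).le) (fun n => htle n) hα0
  have htt' : Tendsto t' atTop (𝓝 0) :=
    squeeze_zero (fun n => (ht0' n).le) (fun n => htle' n) hα0
  have htne : Tendsto t atTop (𝓝[≠] (0:ℝ)) :=
    tendsto_nhdsWithin_of_tendsto_nhds_of_eventually_within _ htt
      (Eventually.of_forall fun n => (ht0 n).ne')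
  have htne' : Tendsto (fun n => -(t' n)) atTop (𝓝[≠] (0:ℝ)) := by
    refine tendsto_nhdsWithin_of_tendsto_nhds_of_eventually_within _ ?_
      (Eventually.of_forall fun n => neg_ne_zero.mpr (ht0' n).ne')
    simpa using htt'.neg
  have H := hc ε hε
  have E1 := htne.eventually H
  have E2 := htne'.eventually H
  filter_upwards [E1, E2] with n e1 e2
  have hmemR : x + t n ∈ Set.Icc (0:ℝ) 1 := hDsub (n+1) (htD n)
  have hmemL : x + -(t' n) ∈ Set.Icc (0:ℝ) 1 := by
    rw [← sub_eq_add_neg]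
    exact hDsub (n+1) (htD' n)
  have e1' := e1 hmemR
  have e2' := e2 hmemL
  have hTR : (∑' k : ℕ, w k * Metric.infDist (x + t n) (D k)) = S n * t n :=
    hTkeyR n (t n) (ht0 n) (htle n) (htD n)
  have hTL : (∑' k : ℕ, w k * Metric.infDist (x + -(t' n)) (D k)) = S n * t' n := by
    rw [← sub_eq_add_neg]
    exact hTkeyL n (t' n) (ht0' n) (htle' n) (htD' n)
  rw [hTR, hTx, abs_of_pos (ht0 n)] at e1'
  rw [hTL, hTx, abs_neg, abs_of_pos (ht0' n)] at e2'
  have h1 : -ε ≤ S n - c := by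
    have : (S n * t n - 0 - c * t n) / t n = S n - c := by
      rw [div_eq_iff (ht0 n).ne']; ring
    rwa [this] at e1'
  have h2 : -ε ≤ S n + c := by
    have : (S n * t' n - 0 - c * -(t' n)) / t' n = S n + c := by
      rw [div_eq_iff (ht0' n).ne']; ring
    rwa [this] at e2'
  show -ε ≤ S n
  linarith
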